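/- arXiv:2004.13884 — 3 statements merged into one kernel-verified Lean document; each statement's English description precedes it below -/
import Mathlib

section
/- Let C ⊆ ℝⁿ be the convex polyhedron determined by vectors x*_1,…,x*_s ∈ ℝⁿ and scalars c_1,…,c_s, let x ∈ C, and let v ∈ N(x;C) (convex normal cone). Assume that the vectors {x*_j : j ∈ I(x)} are linearly independent. Then the domain of the coderivative D*N_C(x,v), i.e. the set {w ∈ ℝⁿ : D*N_C(x,v)(w) ≠ ∅}, equals {w ∈ ℝⁿ : there exist λ_j ≥ 0 for j ∈ I(x) with v = Σ_{j∈I(x)} λ_j x*_j and ⟨x*_j, w⟩ = 0 for every j ∈ I(x) with λ_j > 0}. -/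
open Filter Topology Set MeasureTheory
open scoped RealInnerProductSpace

noncomputable section

/-- The limiting (Mordukhovich) normal cone to a set `Ω` at `z`. -/
def limNormal {E : Type*} [NormedAddCommGroup E] [NormedSpace ℝ E]
    (Ω : Set E) (z : E) : Set E :=
  {v | ∃ (zk vk : ℕ → E) (tk : ℕ → ℝ) (yk : ℕ → E),
      Tendsto zk atTop (𝓝 z) ∧ Tendsto vk atTop (𝓝 v) ∧
      (∀ k, 0 ≤ tk k) ∧ (∀ k, yk k ∈ Ω) ∧
      (∀ k, ‖zk k - yk k‖ = Metric.infDist (zk k) Ω) ∧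
      (∀ k, vk k = tk k • (zk k - yk k))}

/-- The convex normal cone to a convex set `C` at `x` (empty if `x ∉ C`). -/
def convNormal {E : Type*} [NormedAddCommGroup E] [InnerProductSpace ℝ E]
    (C : Set E) (x : E) : Set E :=
  {v | x ∈ C ∧ ∀ y ∈ C, ⟪v, y - x⟫ ≤ 0}

/-- Pairing of two components into the `L²` product. -/
def pmk {E F : Type*} [NormedAddCommGroup E] [NormedAddCommGroup F]
    (a : E) (b : F) : WithLp 2 (E × F) :=
  (WithLp.equiv 2 (E × F)).symm (a, b)

/-- First component of an `L²` product element. -/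
def pfst {E F : Type*} [NormedAddCommGroup E] [NormedAddCommGroup F]
    (q : WithLp 2 (E × F)) : E := ((WithLp.equiv 2 (E × F)) q).1

/-- Second component of an `L²` product element. -/
def psnd {E F : Type*} [NormedAddCommGroup E] [NormedAddCommGroup F]
    (q : WithLp 2 (E × F)) : F := ((WithLp.equiv 2 (E × F)) q).2

/-- The coderivative of a set-valued map `G` at `(z, y) ∈ gph G`, applied to `w`. -/
def coderiv {E F : Type*} [NormedAddCommGroup E] [NormedSpace ℝ E]
    [NormedAddCommGroup F] [NormedSpace ℝ F]
    (G : E → Set F) (z : E) (y : F) (w : F) : Set E :=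
  {v | pmk v (-w) ∈ limNormal {q : WithLp 2 (E × F) | psnd q ∈ G (pfst q)} (pmk z y)}

/-- The limiting subdifferential of `h : E → ℝ` at `z`, via limiting normals to the epigraph. -/
def limSubdiff {E : Type*} [NormedAddCommGroup E] [NormedSpace ℝ E]
    (h : E → ℝ) (z : E) : Set E :=
  {v | pmk v (-1 : ℝ) ∈ limNormal {q : WithLp 2 (E × ℝ) | h (pfst q) ≤ psnd q} (pmk z (h z))}
/-- `Euc n` is the Euclidean space `ℝⁿ`. -/
abbrev Euc (n : ℕ) := EuclideanSpace ℝ (Fin n)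

/-!
Under linear independence of the active gradients, the multipliers of a normal vector are unique
and depend continuously on it: `λ i = ⟪W i, v⟫` for a family `W` biorthogonal to the active
gradients.

If `(u, -w)` is a limiting normal to the graph of `N_C` at `(x, v)`, it is a limit of normals
`(u_k, -w_k)` at graph points `(a_k, p_k) → (x, v)` that make a nonpositive inner product with
every direction along which the graph contains a segment from `(a_k, p_k)`. Shrinking `p_k` along
its ray gives `⟪w, v⟫ ≤ 0`. If `λ i > 0`, the constraint `i` stays active at `a_k` (its
multiplier stays positive), so `p_k + τ x*_i` is still normal and `⟪x*_i, w⟫ ≥ 0`. As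
`⟪w, v⟫ = ∑ λ i ⟪x*_i, w⟫`, all these terms vanish.

Conversely, moving `x` off the constraints with zero multiplier gives points `a → x` whose active
set is exactly `{i | λ i > 0}`. There `v` is normal, and since `w` is orthogonal to the active
gradients, `(a, v)` is the point of the graph nearest to `(a, v - t w)` for small `t > 0`. Hence
`(0, -w)` is a limiting normal, i.e. `0 ∈ D*N_C(x, v)(w)`.
-/

section Product

variable {E F : Type*} [NormedAddCommGroup E] [NormedAddCommGroup F]

@[simp] lemma psnd_pmk (a : E) (b : F) : psnd (pmk a b) = b := rfl

lemma pmk_pfst_psnd (q : WithLp 2 (E × F)) : pmk (pfst q) (psnd q) = q := rfl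

lemma continuous_pfst : Continuous (pfst : WithLp 2 (E × F) → E) :=
  continuous_fst.comp (WithLp.prod_continuous_ofLp 2 E F)

lemma continuous_psnd : Continuous (psnd : WithLp 2 (E × F) → F) :=
  continuous_snd.comp (WithLp.prod_continuous_ofLp 2 E F)

lemma continuous_pmk_left (b : F) : Continuous fun a : E => pmk a b :=
  (WithLp.prod_continuous_toLp 2 E F).comp (continuous_id.prodMk continuous_const)

lemma pmk_add_pmk (a a' : E) (b b' : F) : pmk a b + pmk a' b' = pmk (a + a') (b + b') := rfl

lemma pmk_sub_pmk (a a' : E) (b b' : F) : pmk a b - pmk a' b' = pmk (a - a') (b - b') := rfl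

lemma norm_pmk_sq (a : E) (b : F) : ‖pmk a b‖ ^ 2 = ‖a‖ ^ 2 + ‖b‖ ^ 2 :=
  WithLp.prod_norm_sq_eq_of_L2 _

lemma norm_le_norm_pmk_left (a : E) (b : F) : ‖a‖ ≤ ‖pmk a b‖ :=
  (sq_le_sq₀ (norm_nonneg _) (norm_nonneg _)).1 <| by
    rw [norm_pmk_sq]; linarith [sq_nonneg ‖b‖]

lemma norm_le_norm_pmk_right (a : E) (b : F) : ‖b‖ ≤ ‖pmk a b‖ :=
  (sq_le_sq₀ (norm_nonneg _) (norm_nonneg _)).1 <| by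
    rw [norm_pmk_sq]; linarith [sq_nonneg ‖a‖]

lemma norm_pmk_zero_left (b : F) : ‖pmk (0 : E) b‖ = ‖b‖ :=
  (pow_left_inj₀ (norm_nonneg _) (norm_nonneg _) two_ne_zero).1 <| by
    simp only [norm_pmk_sq, norm_zero]; ring

variable [InnerProductSpace ℝ E] [InnerProductSpace ℝ F]

lemma smul_pmk (t : ℝ) (a : E) (b : F) : t • pmk a b = pmk (t • a) (t • b) := rfl

lemma inner_pmk_pmk (a a' : E) (b b' : F) : ⟪pmk a b, pmk a' b'⟫ = ⟪a, a'⟫ + ⟪b, b'⟫ :=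
  WithLp.prod_inner_apply _ _

end Product

section ProximalNormal

variable {F : Type*} [NormedAddCommGroup F] [NormedSpace ℝ F]

def IsProximalNormal (Ω : Set F) (y u : F) : Prop :=
  ∃ t : ℝ, 0 < t ∧ ∀ q ∈ Ω, ‖t • u‖ ≤ ‖y + t • u - q‖

variable {Ω : Set F} {y u : F}

lemma norm_smul_le_norm_add_smul_sub_of_le {s t : ℝ} (hnear : ∀ q ∈ Ω, ‖t • u‖ ≤ ‖y + t • u - q‖)
    (hs : 0 ≤ s) (hst : s ≤ t) : ∀ q ∈ Ω, ‖s • u‖ ≤ ‖y + s • u - q‖ := by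
  intro q hq
  have hsplit : y + t • u - q = (y + s • u - q) + (t - s) • u := by module
  have hnorm : ‖s • u‖ = ‖t • u‖ - ‖(t - s) • u‖ := by
    rw [norm_smul, norm_smul, norm_smul, Real.norm_of_nonneg hs, Real.norm_of_nonneg (hs.trans hst),
      Real.norm_of_nonneg (sub_nonneg.2 hst)]
    ring
  have := hnear q hq
  rw [hsplit] at this
  linarith [norm_add_le (y + s • u - q) ((t - s) • u)]

lemma mem_limNormal_of_mem_closure {z : F}
    (h : z ∈ closure {y | y ∈ Ω ∧ IsProximalNormal Ω y u}) : u ∈ limNormal Ω z := by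
  have hr : ∀ k : ℕ, 0 < 1 / ((k : ℝ) + 1) := fun _ => Nat.one_div_pos_of_nat
  have hk : ∀ k : ℕ, ∃ y ∈ Ω, dist y z < 1 / ((k : ℝ) + 1) ∧
      ∃ t : ℝ, 0 < t ∧ t ≤ 1 / ((k : ℝ) + 1) ∧ ∀ q ∈ Ω, ‖t • u‖ ≤ ‖y + t • u - q‖ := by
    intro k
    obtain ⟨y, ⟨hyΩ, t, ht, hnear⟩, hyz⟩ := Metric.mem_closure_iff.1 h _ (hr k)
    refine ⟨y, hyΩ, by rwa [dist_comm], min t _, lt_min ht (hr k), min_le_right _ _, ?_⟩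
    exact norm_smul_le_norm_add_smul_sub_of_le hnear (le_min ht.le (hr k).le) (min_le_left _ _)
  choose y hyΩ hyz t ht htk hnear using hk
  have hy : Tendsto y atTop (𝓝 z) := tendsto_iff_dist_tendsto_zero.2 <| squeeze_zero
    (fun _ => dist_nonneg) (fun k => (hyz k).le) tendsto_one_div_add_atTop_nhds_zero_nat
  have ht0 : Tendsto t atTop (𝓝 0) :=
    squeeze_zero (fun k => (ht k).le) htk tendsto_one_div_add_atTop_nhds_zero_nat
  refine ⟨fun k => y k + t k • u, fun _ => u, fun k => (t k)⁻¹, y, ?_, tendsto_const_nhds,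
    fun k => (inv_pos.2 (ht k)).le, hyΩ, fun k => ?_, fun k => ?_⟩
  · simpa using hy.add (ht0.smul_const u)
  · refine le_antisymm ?_ (by rw [← dist_eq_norm]; exact Metric.infDist_le_dist_of_mem (hyΩ k))
    refine (Metric.le_infDist ⟨_, hyΩ k⟩).2 fun q hq => ?_
    rw [dist_eq_norm, add_sub_cancel_left]
    exact hnear k q hq
  · rw [add_sub_cancel_left, smul_smul, inv_mul_cancel₀ (ht k).ne', one_smul]

end ProximalNormal

section ProximalInequality

variable {F : Type*} [NormedAddCommGroup F] [InnerProductSpace ℝ F]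

lemma inner_sub_nonpos_of_eventually_norm_sub_le {z y η : F}
    (h : ∀ᶠ τ in 𝓝[>] (0 : ℝ), ‖z - y‖ ≤ ‖z - (y + τ • η)‖) : ⟪z - y, η⟫ ≤ 0 := by
  have hbound : ∀ᶠ τ in 𝓝[>] (0 : ℝ), 2 * ⟪z - y, η⟫ ≤ τ * ‖η‖ ^ 2 := by
    filter_upwards [h, self_mem_nhdsWithin] with τ hτ (hτ0 : 0 < τ)
    have hsq := pow_le_pow_left₀ (norm_nonneg _) hτ 2
    rw [show z - (y + τ • η) = (z - y) - τ • η by abel, norm_sub_sq_real (z - y), norm_smul,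
      real_inner_smul_right, Real.norm_of_nonneg hτ0.le] at hsq
    nlinarith
  have hlim : Tendsto (fun τ : ℝ => τ * ‖η‖ ^ 2) (𝓝[>] 0) (𝓝 0) := by
    simpa using ((tendsto_id (x := 𝓝 (0 : ℝ))).mul_const (‖η‖ ^ 2)).mono_left nhdsWithin_le_nhds
  linarith [ge_of_tendsto hlim hbound]

lemma exists_seq_of_mem_limNormal {Ω : Set F} {z u : F} (hz : z ∈ Ω) (hu : u ∈ limNormal Ω z) :
    ∃ y v : ℕ → F, Tendsto y atTop (𝓝 z) ∧ Tendsto v atTop (𝓝 u) ∧ (∀ k, y k ∈ Ω) ∧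
      ∀ k η, (∀ᶠ τ in 𝓝[>] (0 : ℝ), y k + τ • η ∈ Ω) → ⟪v k, η⟫ ≤ 0 := by
  obtain ⟨zk, vk, tk, yk, hzk, hvk, htk, hyk, hproj, hvdef⟩ := hu
  refine ⟨yk, vk, ?_, hvk, hyk, fun k η hη => ?_⟩
  · have hle : ∀ k, dist (yk k) z ≤ 2 * dist (zk k) z := fun k => by
      have := Metric.infDist_le_dist_of_mem (x := zk k) hz
      linarith [dist_triangle (yk k) (zk k) z, dist_comm (yk k) (zk k),
        dist_eq_norm (zk k) (yk k), hproj k]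
    have h2 := (tendsto_iff_dist_tendsto_zero.1 hzk).const_mul 2
    rw [mul_zero] at h2
    exact tendsto_iff_dist_tendsto_zero.2 (squeeze_zero (fun _ => dist_nonneg) hle h2)
  · rw [hvdef k, real_inner_smul_left]
    refine mul_nonpos_of_nonneg_of_nonpos (htk k) (inner_sub_nonpos_of_eventually_norm_sub_le ?_)
    filter_upwards [hη] with τ hτ
    rw [hproj k, ← dist_eq_norm]
    exact Metric.infDist_le_dist_of_mem hτ

end ProximalInequality

lemma exists_seq_of_mem_coderiv {E F : Type*} [NormedAddCommGroup E] [InnerProductSpace ℝ E]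
    [NormedAddCommGroup F] [InnerProductSpace ℝ F] {G : E → Set F} {z u : E} {y w : F}
    (hy : y ∈ G z) (hu : u ∈ coderiv G z y w) :
    ∃ (a : ℕ → E) (p wk : ℕ → F), Tendsto a atTop (𝓝 z) ∧ Tendsto p atTop (𝓝 y) ∧
      Tendsto wk atTop (𝓝 w) ∧ (∀ k, p k ∈ G (a k)) ∧
      ∀ k e, (∀ᶠ τ in 𝓝[>] (0 : ℝ), p k + τ • e ∈ G (a k)) → 0 ≤ ⟪wk k, e⟫ := by
  obtain ⟨Y, V, hY, hV, hYG, hnormal⟩ := exists_seq_of_mem_limNormal (z := pmk z y) hy hu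
  refine ⟨fun k => pfst (Y k), fun k => psnd (Y k), fun k => -psnd (V k),
    (continuous_pfst.tendsto _).comp hY, (continuous_psnd.tendsto _).comp hY,
    by simpa using ((continuous_psnd.tendsto _).comp hV).neg, hYG, fun k e he => ?_⟩
  have h := hnormal k (pmk 0 e) (he.mono fun τ hτ => by
    rwa [← pmk_pfst_psnd (Y k), smul_pmk, pmk_add_pmk, smul_zero, add_zero])
  rw [← pmk_pfst_psnd (V k), inner_pmk_pmk, inner_zero_right, zero_add] at h
  rw [inner_neg_left]
  linarith

section ConvexNormal

variable {E : Type*} [NormedAddCommGroup E] [InnerProductSpace ℝ E] {C : Set E} {x p : E}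

lemma smul_mem_convNormal (hp : p ∈ convNormal C x) {t : ℝ} (ht : 0 ≤ t) :
    t • p ∈ convNormal C x :=
  ⟨hp.1, fun y hy => by
    rw [real_inner_smul_left]; exact mul_nonpos_of_nonneg_of_nonpos ht (hp.2 y hy)⟩

lemma inner_nonpos_of_mem_convNormal_of_add_smul_mem (hp : p ∈ convNormal C x) {d : E} {τ : ℝ}
    (hτ : 0 < τ) (hd : x + τ • d ∈ C) : ⟪p, d⟫ ≤ 0 := by
  have h := hp.2 _ hd
  rw [add_sub_cancel_left, real_inner_smul_right, mul_comm] at h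
  exact nonpos_of_mul_nonpos_left h hτ

end ConvexNormal

lemma LinearIndependent.exists_biorthogonal {E : Type*} [NormedAddCommGroup E]
    [InnerProductSpace ℝ E] {κ : Type*} [Finite κ] [DecidableEq κ] {f : κ → E}
    (hf : LinearIndependent ℝ f) : ∃ W : κ → E, ∀ i j, ⟪f i, W j⟫ = if i = j then 1 else 0 := by
  let K := Submodule.span ℝ (Set.range f)
  have : FiniteDimensional ℝ K := FiniteDimensional.span_of_finite ℝ (finite_range f)
  let b := Module.Basis.span hf
  -- `W j` is the Riesz representative, inside the span of `f`, of the `j`-th coordinate of `b`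
  refine ⟨fun j => ((InnerProductSpace.toDual ℝ K).symm (b.coord j).toContinuousLinearMap : E),
    fun i j => ?_⟩
  have hfi : f i = (b i : E) := by simp [b, Module.Basis.span_apply]
  rw [hfi, real_inner_comm]
  dsimp only
  rw [← Submodule.coe_inner, InnerProductSpace.toDual_symm_apply]
  simp [Finsupp.single_apply]

lemma inner_sum_smul_of_biorthogonal {E ι : Type*} [NormedAddCommGroup E] [InnerProductSpace ℝ E]
    [Fintype ι] [DecidableEq ι] {a : ι → E} {S : Set ι} {W : S → E}
    (hW : ∀ i j : S, ⟪a i, W j⟫ = if i = j then 1 else 0) {μ : ι → ℝ} (hμ : ∀ j ∉ S, μ j = 0)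
    (i : S) : ⟪W i, ∑ j, μ j • a j⟫ = μ i := by
  rw [inner_sum, Finset.sum_eq_single (i : ι)]
  · rw [real_inner_smul_right, real_inner_comm, hW i i, if_pos rfl, mul_one]
  · intro j _ hji
    by_cases hj : j ∈ S
    · rw [real_inner_smul_right, real_inner_comm, hW ⟨j, hj⟩ i,
        if_neg fun h => hji (Subtype.ext_iff.1 h), mul_zero]
    · rw [hμ j hj, zero_smul, inner_zero_right]
  · simp

lemma inner_eq_zero_of_inner_sum_smul_nonpos {E ι : Type*} [NormedAddCommGroup E]
    [InnerProductSpace ℝ E] [Fintype ι] {a : ι → E} {μ : ι → ℝ} {w : E} (hμ : ∀ j, 0 ≤ μ j)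
    (hsum : ⟪∑ j, μ j • a j, w⟫ ≤ 0) (hpos : ∀ j, 0 < μ j → 0 ≤ ⟪a j, w⟫) :
    ∀ j, 0 < μ j → ⟪a j, w⟫ = 0 := by
  have hterm : ∀ j ∈ Finset.univ, 0 ≤ μ j * ⟪a j, w⟫ := fun j _ => by
    rcases (hμ j).lt_or_eq with hj | hj
    · exact mul_nonneg hj.le (hpos j hj)
    · rw [← hj, zero_mul]
  rw [sum_inner] at hsum
  simp_rw [real_inner_smul_left] at hsum
  intro j hj
  have hzero := (Finset.sum_eq_zero_iff_of_nonneg hterm).1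
    (le_antisymm hsum (Finset.sum_nonneg hterm)) j (Finset.mem_univ j)
  exact (mul_eq_zero.1 hzero).resolve_left hj.ne'

section Polyhedron

variable {E ι : Type*} [NormedAddCommGroup E] [InnerProductSpace ℝ E]

def polyhedron (a : ι → E) (c : ι → ℝ) : Set E := {x | ∀ j, ⟪a j, x⟫ ≤ c j}

def activeSet (a : ι → E) (c : ι → ℝ) (x : E) : Set ι := {j | ⟪a j, x⟫ = c j}

variable {a : ι → E} {c : ι → ℝ} {x : E}

lemma mem_activeSet {j : ι} : j ∈ activeSet a c x ↔ ⟪a j, x⟫ = c j := Iff.rfl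

lemma add_smul_mem_convNormal_polyhedron {p : E} (hp : p ∈ convNormal (polyhedron a c) x)
    {i : ι} (hi : i ∈ activeSet a c x) {t : ℝ} (ht : 0 ≤ t) :
    p + t • a i ∈ convNormal (polyhedron a c) x :=
  ⟨hp.1, fun y hy => by
    have hiy : ⟪a i, y - x⟫ ≤ 0 := by rw [inner_sub_right, mem_activeSet.1 hi]; linarith [hy i]
    rw [inner_add_left, real_inner_smul_left]
    nlinarith [hp.2 y hy, mul_nonpos_of_nonneg_of_nonpos ht hiy]⟩

section Finite

variable [Finite ι]

lemma eventually_inner_lt_of_notMem_activeSet (hx : x ∈ polyhedron a c) :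
    ∀ᶠ y in 𝓝 x, ∀ j ∉ activeSet a c x, ⟪a j, y⟫ < c j := by
  refine eventually_all.2 fun j => ?_
  by_cases hj : j ∈ activeSet a c x
  · exact Eventually.of_forall fun _ h => absurd hj h
  · exact ((continuous_const.inner continuous_id).tendsto x).eventually_lt_const
      (lt_of_le_of_ne (hx j) hj) |>.mono fun _ h _ => h

lemma eventually_activeSet_subset (hx : x ∈ polyhedron a c) :
    ∀ᶠ y in 𝓝 x, activeSet a c y ⊆ activeSet a c x := by
  filter_upwards [eventually_inner_lt_of_notMem_activeSet hx] with y hy j hj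
  by_contra hjx
  exact (hy j hjx).ne hj

lemma eventually_add_smul_mem_polyhedron (hx : x ∈ polyhedron a c) {d : E}
    (hd : ∀ j ∈ activeSet a c x, ⟪a j, d⟫ ≤ 0) :
    ∀ᶠ τ in 𝓝[>] (0 : ℝ), x + τ • d ∈ polyhedron a c := by
  have hlim : Tendsto (fun τ : ℝ => x + τ • d) (𝓝[>] 0) (𝓝 x) := by
    have hcont : Continuous fun τ : ℝ => x + τ • d := by fun_prop
    simpa using (hcont.tendsto 0).mono_left nhdsWithin_le_nhds
  filter_upwards [hlim.eventually (eventually_inner_lt_of_notMem_activeSet hx),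
    self_mem_nhdsWithin] with τ hlt (hτ : 0 < τ) j
  by_cases hj : j ∈ activeSet a c x
  · rw [inner_add_right, real_inner_smul_right, mem_activeSet.1 hj]
    nlinarith [hd j hj]
  · exact (hlt j hj).le

lemma inner_nonpos_of_mem_convNormal_polyhedron {p d : E}
    (hp : p ∈ convNormal (polyhedron a c) x) (hd : ∀ j ∈ activeSet a c x, ⟪a j, d⟫ ≤ 0) :
    ⟪p, d⟫ ≤ 0 := by
  obtain ⟨τ, hmem, hτ⟩ :=
    ((eventually_add_smul_mem_polyhedron hp.1 hd).and self_mem_nhdsWithin).exists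
  exact inner_nonpos_of_mem_convNormal_of_add_smul_mem hp hτ hmem

lemma inner_eq_zero_of_mem_convNormal_polyhedron {p d : E}
    (hp : p ∈ convNormal (polyhedron a c) x) (hd : ∀ j ∈ activeSet a c x, ⟪a j, d⟫ = 0) :
    ⟪p, d⟫ = 0 := by
  have hneg := inner_nonpos_of_mem_convNormal_polyhedron (d := -d) hp fun j hj => by
    rw [inner_neg_right, hd j hj, neg_zero]
  rw [inner_neg_right] at hneg
  exact le_antisymm (inner_nonpos_of_mem_convNormal_polyhedron hp fun j hj => (hd j hj).le)
    (by linarith)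

end Finite

variable [Fintype ι]

lemma sum_smul_mem_convNormal_polyhedron (hx : x ∈ polyhedron a c) {μ : ι → ℝ}
    (hμ : ∀ j, 0 ≤ μ j) (hsupp : ∀ j ∉ activeSet a c x, μ j = 0) :
    ∑ j, μ j • a j ∈ convNormal (polyhedron a c) x :=
  ⟨hx, fun y hy => by
    rw [sum_inner]
    refine Finset.sum_nonpos fun j _ => ?_
    by_cases hj : j ∈ activeSet a c x
    · rw [real_inner_smul_left, inner_sub_right, mem_activeSet.1 hj]
      exact mul_nonpos_of_nonneg_of_nonpos (hμ j) (sub_nonpos.2 (hy j))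
    · rw [hsupp j hj, zero_smul, inner_zero_left]⟩

lemma exists_nonneg_coeffs_of_mem_convNormal_polyhedron
    (hLI : LinearIndependent ℝ (fun j : activeSet a c x => a j)) {p : E}
    (hp : p ∈ convNormal (polyhedron a c) x) :
    ∃ μ : ι → ℝ, (∀ j, 0 ≤ μ j) ∧ (∀ j ∉ activeSet a c x, μ j = 0) ∧ p = ∑ j, μ j • a j := by
  classical
  set S := Submodule.span ℝ (a '' activeSet a c x)
  have : FiniteDimensional ℝ S := FiniteDimensional.span_of_finite ℝ ((toFinite _).image a)
  have hpS : p ∈ S := by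
    rw [← S.orthogonal_orthogonal, Submodule.mem_orthogonal]
    intro z hz
    rw [real_inner_comm]
    exact inner_eq_zero_of_mem_convNormal_polyhedron hp fun j hj =>
      (S.mem_orthogonal z).1 hz _ (Submodule.subset_span ⟨j, hj, rfl⟩)
  obtain ⟨μ, hμ, rfl⟩ := (Finsupp.mem_span_image_iff_linearCombination ℝ).1 hpS
  have hsupp : ∀ j ∉ activeSet a c x, μ j = 0 := (Finsupp.mem_supported' ℝ μ).1 hμ
  have hsum : Finsupp.linearCombination ℝ a μ = ∑ j, μ j • a j := by
    rw [Finsupp.linearCombination_apply, Finsupp.sum_fintype]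
    simp
  refine ⟨μ, fun j => ?_, hsupp, hsum⟩
  by_cases hj : j ∈ activeSet a c x
  · obtain ⟨W, hW⟩ := hLI.exists_biorthogonal
    have hdual := inner_nonpos_of_mem_convNormal_polyhedron (d := -W ⟨j, hj⟩) hp fun i hi => by
      rw [inner_neg_right, hW ⟨i, hi⟩ ⟨j, hj⟩]
      split_ifs <;> norm_num
    rw [hsum, inner_neg_right, real_inner_comm, inner_sum_smul_of_biorthogonal hW hsupp] at hdual
    linarith
  · rw [hsupp j hj]

lemma eventually_mem_activeSet_of_tendsto {α : Type*} {l : Filter α} {y p : α → E}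
    (hLI : LinearIndependent ℝ (fun j : activeSet a c x => a j)) (hx : x ∈ polyhedron a c)
    (hy : Tendsto y l (𝓝 x)) (hpN : ∀ k, p k ∈ convNormal (polyhedron a c) (y k))
    {μ : ι → ℝ} (hp : Tendsto p l (𝓝 (∑ j, μ j • a j)))
    (hμ : ∀ j ∉ activeSet a c x, μ j = 0) {i : ι} (hi : 0 < μ i) :
    ∀ᶠ k in l, i ∈ activeSet a c (y k) := by
  classical
  have hix : i ∈ activeSet a c x := by
    by_contra h
    exact hi.ne' (hμ i h)
  obtain ⟨W, hW⟩ := hLI.exists_biorthogonal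
  have hlim : Tendsto (fun k => ⟪W ⟨i, hix⟩, p k⟫) l (𝓝 (μ i)) := by
    rw [← inner_sum_smul_of_biorthogonal hW hμ ⟨i, hix⟩]
    exact tendsto_const_nhds.inner hp
  filter_upwards [hy.eventually (eventually_activeSet_subset hx),
    hlim.eventually_const_lt hi] with k hsub hpos
  by_contra hik
  -- `W i` is orthogonal to every constraint active at `y k`, whereas `⟪W i, p k⟫ → μ i > 0`
  have hzero := inner_eq_zero_of_mem_convNormal_polyhedron (hpN k) (d := W ⟨i, hix⟩)
    fun j hj => by
      rw [hW ⟨j, hsub hj⟩ ⟨i, hix⟩, if_neg]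
      rintro ⟨⟩
      exact hik hj
  rw [real_inner_comm] at hzero
  linarith

lemma mem_closure_activeSet_eq (hLI : LinearIndependent ℝ (fun j : activeSet a c x => a j))
    (hx : x ∈ polyhedron a c) {J : Set ι} (hJ : J ⊆ activeSet a c x) :
    x ∈ closure {y | y ∈ polyhedron a c ∧ activeSet a c y = J} := by
  classical
  obtain ⟨W, hW⟩ := hLI.exists_biorthogonal
  set d : E := -∑ j : activeSet a c x, if (j : ι) ∈ J then 0 else W j
  have hd : ∀ i : activeSet a c x, ⟪a i, d⟫ = if (i : ι) ∈ J then 0 else -1 := by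
    intro i
    rw [inner_neg_right, inner_sum, Finset.sum_eq_single i]
    · split_ifs <;> simp [hW]
    · intro j _ hji
      split_ifs <;> simp [hW, Ne.symm hji]
    · simp
  have hlim : Tendsto (fun δ : ℝ => x + δ • d) (𝓝[>] 0) (𝓝 x) := by
    have hcont : Continuous fun δ : ℝ => x + δ • d := by fun_prop
    simpa using (hcont.tendsto 0).mono_left nhdsWithin_le_nhds
  refine mem_closure_of_tendsto hlim ?_
  filter_upwards [hlim.eventually (eventually_inner_lt_of_notMem_activeSet hx),
    self_mem_nhdsWithin] with δ hlt (hδ : 0 < δ)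
  have hact : ∀ i (hi : i ∈ activeSet a c x),
      ⟪a i, x + δ • d⟫ = c i + δ * if i ∈ J then 0 else -1 := fun i hi => by
    rw [inner_add_right, real_inner_smul_right, mem_activeSet.1 hi, hd ⟨i, hi⟩]
  refine ⟨fun j => ?_, Set.ext fun j => ⟨fun hj => ?_, fun hj => ?_⟩⟩
  · by_cases hj : j ∈ activeSet a c x
    · rw [hact j hj]
      split_ifs <;> linarith
    · exact (hlt j hj).le
  · by_contra hjJ
    by_cases hjx : j ∈ activeSet a c x
    · rw [mem_activeSet, hact j hjx, if_neg hjJ] at hj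
      linarith
    · exact (hlt j hjx).ne hj
  · rw [mem_activeSet, hact j (hJ hj), if_pos hj, mul_zero, add_zero]

lemma isProximalNormal_graph_convNormal_polyhedron {y v w : E}
    (hv : v ∈ convNormal (polyhedron a c) y)
    (hw : ∀ j ∈ activeSet a c y, ⟪a j, w⟫ = 0) :
    IsProximalNormal {q : WithLp 2 (E × E) | psnd q ∈ convNormal (polyhedron a c) (pfst q)}
      (pmk y v) (pmk 0 (-w)) := by
  obtain ⟨ρ, hρ, hball⟩ := Metric.eventually_nhds_iff.1 (eventually_activeSet_subset hv.1)
  have hvw : ⟪v, w⟫ = 0 := inner_eq_zero_of_mem_convNormal_polyhedron hv hw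
  set t := ρ / (‖w‖ + 1)
  have ht : 0 < t := by positivity
  have htw : t * ‖w‖ < ρ := by
    rw [div_mul_eq_mul_div, div_lt_iff₀ (by positivity)]
    nlinarith [norm_nonneg w]
  refine ⟨t, ht, fun q hq => ?_⟩
  rw [← pmk_pfst_psnd q, smul_pmk, pmk_add_pmk, pmk_sub_pmk, smul_zero, add_zero,
    norm_pmk_zero_left, norm_smul, norm_neg, Real.norm_of_nonneg ht.le, smul_neg]
  set b := pfst q
  set p := psnd q
  rw [show v + -(t • w) - p = v - p - t • w by abel]
  by_cases hb : dist b y < ρ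
  · -- near `y` every normal `p` at `b` is orthogonal to `w`, so Pythagoras applies
    have hpw : ⟪v - p, t • w⟫ = 0 := by
      rw [inner_sub_left, real_inner_smul_right, real_inner_smul_right, hvw,
        inner_eq_zero_of_mem_convNormal_polyhedron hq fun j hj => hw j (hball hb hj)]
      ring
    have hpyth := norm_sub_sq_eq_norm_sq_add_norm_sq_real hpw
    calc t * ‖w‖ = ‖t • w‖ := by rw [norm_smul, Real.norm_of_nonneg ht.le]
      _ ≤ ‖v - p - t • w‖ :=
        (mul_self_le_mul_self_iff (norm_nonneg _) (norm_nonneg _)).2 (by nlinarith)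
      _ ≤ _ := norm_le_norm_pmk_right (y - b) _
  · calc t * ‖w‖ ≤ ρ := htw.le
      _ ≤ ‖y - b‖ := by rw [← dist_eq_norm, dist_comm]; exact not_lt.1 hb
      _ ≤ _ := norm_le_norm_pmk_left _ (v - p - t • w)

lemma inner_eq_zero_of_mem_coderiv_convNormal_polyhedron
    (hLI : LinearIndependent ℝ (fun j : activeSet a c x => a j)) {μ : ι → ℝ} (hμ0 : ∀ j, 0 ≤ μ j)
    (hμ : ∀ j ∉ activeSet a c x, μ j = 0)
    (hv : ∑ j, μ j • a j ∈ convNormal (polyhedron a c) x) {u w : E}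
    (hu : u ∈ coderiv (convNormal (polyhedron a c)) x (∑ j, μ j • a j) w) :
    ∀ j, 0 < μ j → ⟪a j, w⟫ = 0 := by
  obtain ⟨y, p, wk, hy, hp, hw, hpN, hnonneg⟩ := exists_seq_of_mem_coderiv hv hu
  refine inner_eq_zero_of_inner_sum_smul_nonpos hμ0 ?_ fun i hi => ?_
  · have hk : ∀ k, 0 ≤ ⟪wk k, -p k⟫ := fun k => hnonneg k _ <| by
      filter_upwards [Ioo_mem_nhdsGT one_pos] with τ hτ
      rw [show p k + τ • -p k = (1 - τ) • p k by module]
      exact smul_mem_convNormal (hpN k) (by linarith [hτ.2])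
    have hlim := ge_of_tendsto' (hw.inner hp.neg) hk
    rw [inner_neg_right, real_inner_comm] at hlim
    linarith
  · have hk := (eventually_mem_activeSet_of_tendsto hLI hv.1 hy hpN hp hμ hi).mono
      fun k hk => hnonneg k (a i) <| by
        filter_upwards [self_mem_nhdsWithin] with τ (hτ : 0 < τ)
        exact add_smul_mem_convNormal_polyhedron (hpN k) hk hτ.le
    rw [real_inner_comm]
    exact ge_of_tendsto (hw.inner tendsto_const_nhds) hk

lemma zero_mem_coderiv_convNormal_polyhedron
    (hLI : LinearIndependent ℝ (fun j : activeSet a c x => a j)) (hx : x ∈ polyhedron a c)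
    {μ : ι → ℝ} (hμ0 : ∀ j, 0 ≤ μ j) (hμ : ∀ j ∉ activeSet a c x, μ j = 0) {w : E}
    (hw : ∀ j, 0 < μ j → ⟪a j, w⟫ = 0) :
    (0 : E) ∈ coderiv (convNormal (polyhedron a c)) x (∑ j, μ j • a j) w := by
  have hJ : {j | 0 < μ j} ⊆ activeSet a c x := fun j hj => by
    by_contra h
    exact (ne_of_gt hj) (hμ j h)
  refine mem_limNormal_of_mem_closure <| closure_mono ?_ <|
    mem_closure_image (f := fun y => pmk y (∑ j, μ j • a j)) (continuous_pmk_left _).continuousAt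
      (mem_closure_activeSet_eq hLI hx hJ)
  rintro _ ⟨y, ⟨hy, hyJ⟩, rfl⟩
  have hvy := sum_smul_mem_convNormal_polyhedron hy hμ0 fun j hj => by
    rw [hyJ] at hj
    exact le_antisymm (not_lt.1 hj) (hμ0 j)
  exact ⟨hvy, isProximalNormal_graph_convNormal_polyhedron hvy fun j hj => hw j (hyJ.subset hj)⟩

end Polyhedron

theorem statement1_general (n s : ℕ)
    (xs : Fin s → Euc n) (c : Fin s → ℝ)
    (C : Set (Euc n)) (hC : C = {x | ∀ j, ⟪xs j, x⟫ ≤ c j})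
    (x : Euc n)
    (v : Euc n) (hv : v ∈ convNormal C x)
    (hLI : LinearIndependent ℝ (fun j : {j : Fin s // ⟪xs j, x⟫ = c j} => xs j)) :
    {w : Euc n | (coderiv (fun y => convNormal C y) x v w).Nonempty} =
      {w : Euc n | ∃ lam : Fin s → ℝ, (∀ j, 0 ≤ lam j) ∧
        (∀ j, ⟪xs j, x⟫ ≠ c j → lam j = 0) ∧
        v = ∑ j, lam j • xs j ∧
        (∀ j, 0 < lam j → ⟪xs j, w⟫ = 0)} := by
  change C = polyhedron xs c at hC
  subst hC
  ext w
  constructor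
  · rintro ⟨u, hu⟩
    obtain ⟨lam, hlam0, hlam, rfl⟩ := exists_nonneg_coeffs_of_mem_convNormal_polyhedron hLI hv
    exact ⟨lam, hlam0, hlam, rfl,
      inner_eq_zero_of_mem_coderiv_convNormal_polyhedron hLI hlam0 hlam hv hu⟩
  · rintro ⟨lam, hlam0, hlam, rfl, hw⟩
    exact ⟨0, zero_mem_coderiv_convNormal_polyhedron hLI hv.1 hlam0 hlam hw⟩

/-- computation of the domain of the coderivative of the normal cone
mapping `x ↦ N(x;C)` for a convex polyhedron under LICQ. -/
theorem statement1 (n s : ℕ)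
    (xs : Fin s → Euc n) (c : Fin s → ℝ)
    (C : Set (Euc n)) (hC : C = {x | ∀ j, ⟪xs j, x⟫ ≤ c j})
    (x : Euc n) (hx : x ∈ C)
    (v : Euc n) (hv : v ∈ convNormal C x)
    (hLI : LinearIndependent ℝ (fun j : {j : Fin s // ⟪xs j, x⟫ = c j} => xs j)) :
    {w : Euc n | (coderiv (fun y => convNormal C y) x v w).Nonempty} =
      {w : Euc n | ∃ lam : Fin s → ℝ, (∀ j, 0 ≤ lam j) ∧
        (∀ j, ⟪xs j, x⟫ ≠ c j → lam j = 0) ∧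
        v = ∑ j, lam j • xs j ∧
        (∀ j, 0 < lam j → ⟪xs j, w⟫ = 0)} :=
  statement1_general n s xs c C hC x v hv hLI
end
end

section
/- Let C ⊆ ℝⁿ be the convex polyhedron determined by vectors x*_1,…,x*_s ∈ ℝⁿ and scalars c_1,…,c_s, let g : ℝⁿ×ℝ^d → ℝⁿ be locally Lipschitz continuous, and let F(x,u) := N(x;C) + g(x,u). Fix x ∈ C at which PLICQ holds, u ∈ ℝ^d, and ω ∈ g(x,u) + N(x;C). Then every pair (z_x, z_u) ∈ ℝⁿ×ℝ^d belonging to D*F((x,u),ω)(0) satisfies z_u = 0. -/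
open Filter Topology Set MeasureTheory
open scoped RealInnerProductSpace

noncomputable section

/-!
Write `F (x, u) = N x + g (x, u)`. If `y = ((x, b), ω')` is a nearest graph point to
`q = ((x₀, a), ω₀)`, then moving `b` towards `a` by the fraction `t = 1/(1 + K²)` while keeping
the normal `ω' - g (x, b) ∈ N x` gives another graph point, whose `ω`-component moves by at most
`K t ‖a - b‖` since `g` is `K`-Lipschitz near the base point. Comparing the two distances to `q`
yields `‖a - b‖ ≤ 2K ‖ω₀ - ω'‖`. Scaling and passing to the limit in the definition of the
limiting normal cone bounds the `u`-part of any `z ∈ D*F(w)` by `2K ‖w‖`, which vanishes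
for `w = 0`.
-/

section ProdL2

variable {E F : Type*} [NormedAddCommGroup E] [NormedAddCommGroup F]

lemma pfst_eq_fst (q : WithLp 2 (E × F)) : pfst q = q.fst := rfl

lemma psnd_eq_snd (q : WithLp 2 (E × F)) : psnd q = q.snd := rfl

@[simp] lemma fst_pmk (a : E) (b : F) : (pmk a b).fst = a := rfl

@[simp] lemma snd_pmk (a : E) (b : F) : (pmk a b).snd = b := rfl

lemma norm_sq_sub_eq {V : Type*} [NormedAddCommGroup V]
    (q r : WithLp 2 (WithLp 2 (E × F) × V)) :
    ‖q - r‖ ^ 2 =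
      ‖q.fst.fst - r.fst.fst‖ ^ 2 + ‖q.fst.snd - r.fst.snd‖ ^ 2 + ‖q.snd - r.snd‖ ^ 2 := by
  rw [WithLp.prod_norm_sq_eq_of_L2, WithLp.prod_norm_sq_eq_of_L2, WithLp.sub_fst, WithLp.sub_fst,
    WithLp.sub_snd, WithLp.sub_snd]

end ProdL2

lemma le_two_mul_of_sq_add_sq_le {K β γ δ : ℝ} (hK : 0 ≤ K) (hβ : 0 ≤ β) (hδ : 0 ≤ δ)
    (hδγ : δ ≤ γ + K * (β / (1 + K ^ 2)))
    (h : β ^ 2 + γ ^ 2 ≤ (1 - 1 / (1 + K ^ 2)) ^ 2 * β ^ 2 + δ ^ 2) :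
    β ≤ 2 * K * γ := by
  set t := 1 / (1 + K ^ 2) with ht
  have ht0 : 0 < t := by positivity
  have htK : t * (1 + K ^ 2) = 1 := by rw [ht]; field_simp
  have hδt : δ ≤ γ + K * (t * β) := by rwa [ht, one_div_mul_eq_div]
  have hδsq : δ ^ 2 ≤ (γ + K * (t * β)) ^ 2 := pow_le_pow_left₀ hδ hδt 2
  -- with this `t` the quadratic terms `t²(1+K²)β²` use up exactly half the first-order gain `2tβ²`
  have hβsq : β ^ 2 ≤ 2 * K * β * γ := by
    have htβ : t ^ 2 * (1 + K ^ 2) * β ^ 2 = t * β ^ 2 := by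
      rw [sq t, mul_assoc t t, htK, mul_one]
    have : 0 ≤ t * (2 * K * β * γ - β ^ 2) := by nlinarith
    nlinarith
  rcases hβ.eq_or_lt with rfl | hβpos
  · simp only [mul_zero, add_zero] at hδt
    nlinarith
  · nlinarith

lemma tendsto_of_norm_sub_eq_infDist {E : Type*} [NormedAddCommGroup E] {Ω : Set E} {z : E}
    (hz : z ∈ Ω) {zk yk : ℕ → E} (hzk : Tendsto zk atTop (𝓝 z))
    (hnear : ∀ k, ‖zk k - yk k‖ = Metric.infDist (zk k) Ω) :
    Tendsto yk atTop (𝓝 z) := by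
  have hdist : Tendsto (fun k => ‖zk k - yk k‖) atTop (𝓝 0) := by
    simpa only [hnear, Metric.infDist_zero_of_mem hz, Function.comp_def] using
      ((Metric.continuous_infDist_pt Ω).tendsto z).comp hzk
  simpa using hzk.sub (tendsto_zero_iff_norm_tendsto_zero.mpr hdist)

def pgraph {E F : Type*} [NormedAddCommGroup E] [NormedAddCommGroup F] (G : E → Set F) :
    Set (WithLp 2 (E × F)) :=
  {q | psnd q ∈ G (pfst q)}

lemma sub_add_mem_of_fst_eq {E U V : Type*} [NormedAddCommGroup E] [NormedAddCommGroup U]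
    [NormedAddCommGroup V] {N : E → Set V} {g : WithLp 2 (E × U) → V}
    {F : WithLp 2 (E × U) → Set V} (hF : ∀ p, F p = {ω | ∃ v ∈ N (pfst p), ω = v + g p})
    {p p' : WithLp 2 (E × U)} {ω : V} (hω : ω ∈ F p) (hp : p'.fst = p.fst) :
    ω - g p + g p' ∈ F p' := by
  rw [hF] at hω ⊢
  obtain ⟨v, hv, rfl⟩ := hω
  exact ⟨v, by rwa [pfst_eq_fst, hp], by abel⟩

section ShiftedNormalMap

variable {E U V : Type*} [NormedAddCommGroup E] [NormedSpace ℝ E]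
  [NormedAddCommGroup U] [NormedSpace ℝ U] [NormedAddCommGroup V]
  {N : E → Set V} {g : WithLp 2 (E × U) → V} {F : WithLp 2 (E × U) → Set V}

open scoped NNReal

lemma norm_sub_fst_snd_le_of_nearest (hF : ∀ p, F p = {ω | ∃ v ∈ N (pfst p), ω = v + g p})
    {K : ℝ≥0} {q y : WithLp 2 (WithLp 2 (E × U) × V)} (hy : y ∈ pgraph F)
    (hnear : ‖q - y‖ = Metric.infDist q (pgraph F))
    (hg : LipschitzOnWith K g (Metric.closedBall y.fst (dist q.fst y.fst))) :
    ‖q.fst.snd - y.fst.snd‖ ≤ 2 * K * ‖q.snd - y.snd‖ := by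
  set β := q.fst.snd - y.fst.snd
  set t : ℝ := 1 / (1 + K ^ 2)
  have ht : 0 < t := by positivity
  have ht1 : t ≤ 1 := by rw [div_le_one (by positivity)]; nlinarith
  -- compare `y` with the graph point obtained by moving its `U`-component towards `q`
  set y' : WithLp 2 (E × U) := y.fst + t • WithLp.toLp 2 (0, β)
  set y'' : WithLp 2 (WithLp 2 (E × U) × V) := WithLp.toLp 2 (y', y.snd - g y.fst + g y')
  have hfst_fst : y'.fst = y.fst.fst := by simp [y']
  have hle : ‖q - y‖ ≤ ‖q - y''‖ := by
    rw [hnear, ← dist_eq_norm]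
    exact Metric.infDist_le_dist_of_mem (sub_add_mem_of_fst_eq hF hy hfst_fst)
  have hdist : dist y' y.fst = t * ‖β‖ := by
    simp [y', dist_eq_norm, norm_smul, ht.le]
  have hlip : ‖g y' - g y.fst‖ ≤ K * (t * ‖β‖) := by
    rw [← dist_eq_norm, ← hdist]
    refine hg.dist_le_mul y' ?_ y.fst (Metric.mem_closedBall_self dist_nonneg)
    rw [Metric.mem_closedBall, hdist]
    calc t * ‖β‖ ≤ ‖β‖ := mul_le_of_le_one_left (norm_nonneg _) ht1
      _ = ‖(q.fst - y.fst).snd‖ := rfl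
      _ ≤ dist q.fst y.fst := by rw [dist_eq_norm]; exact WithLp.norm_snd_le _ _
  have hfst_snd : q.fst.snd - y''.fst.snd = (1 - t) • β := by
    change q.fst.snd - y'.snd = _
    simp only [y', WithLp.add_snd, WithLp.smul_snd, WithLp.toLp_snd, β, sub_smul, one_smul]
    abel
  have hsnd : q.snd - y''.snd = (q.snd - y.snd) - (g y' - g y.fst) := by
    change q.snd - (y.snd - g y.fst + g y') = _
    abel
  have hsq := pow_le_pow_left₀ (norm_nonneg _) hle 2
  rw [norm_sq_sub_eq, norm_sq_sub_eq, show y''.fst.fst = y.fst.fst from hfst_fst, hfst_snd,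
    hsnd, norm_smul, mul_pow, Real.norm_of_nonneg (sub_nonneg.mpr ht1)] at hsq
  refine le_two_mul_of_sq_add_sq_le K.coe_nonneg (norm_nonneg β)
    (norm_nonneg (q.snd - y.snd - (g y' - g y.fst))) ?_ (by linarith)
  rw [← one_div_mul_eq_div]
  linarith [norm_sub_le (q.snd - y.snd) (g y' - g y.fst)]

theorem exists_norm_snd_le_of_mem_coderiv [NormedSpace ℝ V]
    (hF : ∀ p, F p = {ω | ∃ v ∈ N (pfst p), ω = v + g p}) (hg : LocallyLipschitz g)
    {p : WithLp 2 (E × U)} {ω : V} (hω : ω ∈ F p) :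
    ∃ K : ℝ≥0, ∀ w, ∀ z ∈ coderiv F p ω w, ‖z.snd‖ ≤ 2 * K * ‖w‖ := by
  obtain ⟨K, s, hs, hK⟩ := hg p
  obtain ⟨ε, hε, hball⟩ := Metric.mem_nhds_iff.mp hs
  refine ⟨K, fun w z hz => ?_⟩
  obtain ⟨zk, vk, tk, yk, hzk, hvk, -, hyk, hnear, hvk_eq⟩ := hz
  have hyk_lim : Tendsto yk atTop (𝓝 (pmk p ω)) :=
    tendsto_of_norm_sub_eq_infDist (Ω := pgraph F) hω hzk hnear
  have hQ := Metric.tendsto_nhds.mp (((WithLp.continuous_fst _ _ _).tendsto _).comp hzk)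
    (ε / 3) (by positivity)
  have hP := Metric.tendsto_nhds.mp (((WithLp.continuous_fst _ _ _).tendsto _).comp hyk_lim)
    (ε / 3) (by positivity)
  have hev : ∀ᶠ k in atTop, ‖(vk k).fst.snd‖ ≤ 2 * K * ‖(vk k).snd‖ := by
    filter_upwards [hQ, hP] with k hQk hPk
    have hsub : Metric.closedBall (yk k).fst (dist (zk k).fst (yk k).fst) ⊆ s := by
      intro r hr
      apply hball
      rw [Metric.mem_closedBall] at hr
      rw [Metric.mem_ball]
      simp only [Function.comp_apply, fst_pmk] at hQk hPk
      linarith [dist_triangle r (yk k).fst p, dist_triangle (zk k).fst p (yk k).fst,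
        dist_comm (yk k).fst p]
    have hk := norm_sub_fst_snd_le_of_nearest hF (hyk k) (hnear k) (hK.mono hsub)
    rw [hvk_eq k, WithLp.smul_fst, WithLp.smul_snd, WithLp.smul_snd, norm_smul, norm_smul,
      mul_left_comm]
    exact mul_le_mul_of_nonneg_left hk (norm_nonneg _)
  have hlim_fst : Tendsto (fun k => ‖(vk k).fst.snd‖) atTop (𝓝 ‖z.snd‖) :=
    (((WithLp.continuous_snd _ _ _).comp (WithLp.continuous_fst _ _ _)).tendsto _
      |>.comp hvk).norm
  have hlim_snd : Tendsto (fun k => 2 * K * ‖(vk k).snd‖) atTop (𝓝 (2 * K * ‖w‖)) := by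
    simpa only [snd_pmk, norm_neg, Function.comp_apply] using
      (((WithLp.continuous_snd _ _ _).tendsto _).comp hvk).norm.const_mul (2 * (K : ℝ))
  exact le_of_tendsto_of_tendsto hlim_fst hlim_snd hev

end ShiftedNormalMap

theorem statement5_general (n d : ℕ)
    (g : WithLp 2 (Euc n × Euc d) → Euc n)
    (hg : LocallyLipschitz g)
    (C : Set (Euc n))
    (F : WithLp 2 (Euc n × Euc d) → Set (Euc n))
    (hF : ∀ p, F p = {ω | ∃ v ∈ convNormal C (pfst p), ω = v + g p})
    (x : Euc n)
    (u : Euc d) (ω : Euc n)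
    (hω : ∃ v ∈ convNormal C x, ω = g (pmk x u) + v)
    (z : WithLp 2 (Euc n × Euc d))
    (hz : z ∈ coderiv F (pmk x u) ω (0 : Euc n)) :
    psnd z = 0 := by
  have hω' : ω ∈ F (pmk x u) := by
    obtain ⟨v, hv, rfl⟩ := hω
    rw [hF]
    exact ⟨v, hv, add_comm _ _⟩
  obtain ⟨K, hK⟩ := exists_norm_snd_le_of_mem_coderiv hF hg hω'
  simpa [psnd_eq_snd] using hK 0 z hz

/-- vanishing of the `u`-component of coderivative elements of
`F(x,u) = N(x;C) + g(x,u)` at `w = 0` under PLICQ. -/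
theorem statement5 (n d s : ℕ)
    (xs : Fin s → Euc n) (c : Fin s → ℝ)
    (g : WithLp 2 (Euc n × Euc d) → Euc n)
    (hg : LocallyLipschitz g)
    (C : Set (Euc n)) (hC : C = {x | ∀ j, ⟪xs j, x⟫ ≤ c j})
    (F : WithLp 2 (Euc n × Euc d) → Set (Euc n))
    (hF : ∀ p, F p = {ω | ∃ v ∈ convNormal C (pfst p), ω = v + g p})
    (x : Euc n) (hx : x ∈ C)
    (hPLICQ : ∀ α : Fin s → ℝ, (∀ j, 0 ≤ α j) →
      (∀ j, ⟪xs j, x⟫ ≠ c j → α j = 0) → (∑ j, α j • xs j) = 0 → ∀ j, α j = 0)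
    (u : Euc d) (ω : Euc n)
    (hω : ∃ v ∈ convNormal C x, ω = g (pmk x u) + v)
    (z : WithLp 2 (Euc n × Euc d))
    (hz : z ∈ coderiv F (pmk x u) ω (0 : Euc n)) :
    psnd z = 0 :=
  statement5_general n d g hg C F hF x u ω hω z hz
end
end

section
/- Let C ⊆ ℝⁿ be the convex polyhedron determined by vectors x*_1,…,x*_s ∈ ℝⁿ and scalars c_1,…,c_s, let U ⊆ ℝ^d be nonempty and compact, and let g : ℝⁿ×ℝ^d → ℝⁿ satisfy the standing assumptions. Let (x̄,ū) be a feasible pair for problem (P) on [0,T] and assume PLICQ holds at x̄(t) for every t ∈ [0,T]. Then there exist Lebesgue measurable functions η¹,…,ηˢ : [0,T] → [0,∞) with ∫₀ᵀ η^j(t)² dt < ∞ for each j, such that η^j(t) = 0 whenever ⟨x*_j, x̄(t)⟩ < c_j, and −ẋ̄(t) = Σ_{j=1}^s η^j(t) x*_j + g(x̄(t), ū(t)) for a.e. t ∈ [0,T]. -/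
open Filter Topology Set MeasureTheory
open scoped RealInnerProductSpace

noncomputable section

/-- PLICQ (positive linear independence constraint qualification) for the polyhedron
determined by `xs` and `c`, at the point `x`. -/
def PLICQ {n s : ℕ} (xs : Fin s → Euc n) (c : Fin s → ℝ) (x : Euc n) : Prop :=
  ∀ α : Fin s → ℝ, (∀ j, 0 ≤ α j) → (∀ j, ⟪xs j, x⟫ ≠ c j → α j = 0) →
    (∑ j, α j • xs j) = 0 → ∀ j, α j = 0

/-- A feasible pair of the sweeping optimal control problem `(P)`: `x` is absolutely
continuous on `[0,T]` with derivative `x' ∈ L²`, starts at `x0`, the control `u` is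
measurable with values in `Uset` a.e., and the sweeping inclusion
`-ẋ(t) ∈ N(x(t);C) + g(x(t),u(t))` holds a.e. on `[0,T]`. -/
def FeasibleP {n d : ℕ} (T : ℝ) (x0 : Euc n)
    (C : Set (Euc n)) (Uset : Set (Euc d))
    (g : WithLp 2 (Euc n × Euc d) → Euc n)
    (x x' : ℝ → Euc n) (u : ℝ → Euc d) : Prop :=
  x 0 = x0 ∧
  (∀ t ∈ Set.Icc 0 T, x t = x0 + ∫ s in (0:ℝ)..t, x' s) ∧
  IntegrableOn x' (Set.Icc 0 T) ∧
  IntegrableOn (fun t => ‖x' t‖ ^ 2) (Set.Icc 0 T) ∧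
  AEStronglyMeasurable u (volume.restrict (Set.Icc 0 T)) ∧
  (∀ᵐ t ∂(volume : Measure ℝ), t ∈ Set.Icc 0 T → u t ∈ Uset) ∧
  (∀ᵐ t ∂(volume : Measure ℝ), t ∈ Set.Icc 0 T →
    ∃ v ∈ convNormal C (x t), -x' t = v + g (pmk (x t) (u t)))

/-- A function is piecewise constant on `[0,T]` if there is a finite partition of
`[0,T]` on each of whose subintervals the function is constant. -/
def PiecewiseConstOn {F : Type*} (u : ℝ → F) (T : ℝ) : Prop :=
  ∃ (l : ℕ) (τ : ℕ → ℝ), τ 0 = 0 ∧ τ l = T ∧ (∀ i < l, τ i < τ (i + 1)) ∧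
    ∀ i < l, ∀ t ∈ Set.Ico (τ i) (τ (i + 1)), u t = u (τ i)

/-- `(xb, ub)` (with `xb' ` the derivative of `xb`) is a relaxed `W^{1,2} × L²` local
minimizer of problem `(P)` with modulus `ε`. -/
def RelaxedLocalMin {n d : ℕ} (T : ℝ) (x0 : Euc n) (C : Set (Euc n)) (Uset : Set (Euc d))
    (g : WithLp 2 (Euc n × Euc d) → Euc n) (φ : Euc n → ℝ)
    (xb xb' : ℝ → Euc n) (ub : ℝ → Euc d) (ε : ℝ) : Prop :=
  ∀ (y y' : ℝ → Euc n) (u : ℝ → Euc d),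
    AEStronglyMeasurable u (volume.restrict (Set.Icc 0 T)) →
    (∀ᵐ t ∂(volume : Measure ℝ), t ∈ Set.Icc 0 T → u t ∈ convexHull ℝ Uset) →
    y 0 = x0 →
    (∀ t ∈ Set.Icc 0 T, y t = x0 + ∫ s in (0:ℝ)..t, y' s) →
    IntegrableOn y' (Set.Icc 0 T) →
    IntegrableOn (fun t => ‖y' t‖ ^ 2) (Set.Icc 0 T) →
    (∀ᵐ t ∂(volume : Measure ℝ), t ∈ Set.Icc 0 T →
      ∃ v ∈ convNormal C (y t),
        ∃ w ∈ convexHull ℝ ((fun uu => g (pmk (y t) uu)) '' Uset), -y' t = v + w) →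
    (∃ (yk yk' : ℕ → ℝ → Euc n) (uk : ℕ → ℝ → Euc d),
      (∀ k, FeasibleP T x0 C Uset g (yk k) (yk' k) (uk k) ∧ PiecewiseConstOn (uk k) T) ∧
      Tendsto (fun k => ∫ t in (0:ℝ)..T, (‖yk k t - y t‖ ^ 2 + ‖yk' k t - y' t‖ ^ 2))
        atTop (𝓝 0) ∧
      (∃ v : ℕ → ℝ → Euc d,
        (∀ k, ∃ (M : ℕ) (lw : ℕ → ℝ), (∀ i, 0 ≤ lw i) ∧ (∑ i ∈ Finset.range M, lw i) = 1 ∧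
          ∀ t, v k t = ∑ i ∈ Finset.range M, lw i • uk i t) ∧
        Tendsto (fun k => ∫ t in (0:ℝ)..T, ‖v k t - u t‖ ^ 2) atTop (𝓝 0))) →
    (∫ t in (0:ℝ)..T, (‖y' t - xb' t‖ ^ 2 + ‖u t - ub t‖ ^ 2)) < ε →
    φ (xb T) ≤ φ (y T)

/-!
By Farkas' lemma, the normal cone to the polyhedron at `x` is the cone spanned by the active
constraint normals, and by the conic Carathéodory theorem each of its elements `w` is a nonnegative
combination of a linearly independent family of active normals, whose coefficients are continuous
linear functions of `w`. Choosing, for each `(x, w)`, the first such family in a fixed enumeration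
gives a Borel multiplier map with linear growth in `w`. Composed with the trajectory and with a
Borel version of the normal velocity component `w = -ẋ - g(x, u) ∈ L²`, it yields the multipliers.
-/

section ConicCaratheodory

variable {ι E : Type*} [Fintype ι] [AddCommGroup E] [Module ℝ E]

theorem exists_linearIndepOn_nonneg_sum_eq (v : ι → E) {α : ι → ℝ} (hα : 0 ≤ α) :
    ∃ (B : Finset ι) (β : ι → ℝ), LinearIndepOn ℝ v (B : Set ι) ∧ 0 ≤ β ∧
      (∀ j ∉ B, β j = 0) ∧ (∀ j, α j = 0 → β j = 0) ∧ ∑ j, β j • v j = ∑ j, α j • v j := by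
  classical
  induction hk : (Finset.univ.filter (α · ≠ 0)).card using Nat.strong_induction_on
    generalizing α with
  | _ k ih =>
  set S := Finset.univ.filter (α · ≠ 0) with hS
  have hS_mem : ∀ {j}, j ∈ S ↔ α j ≠ 0 := by simp [hS]
  by_cases hli : LinearIndepOn ℝ v (S : Set ι)
  · exact ⟨S, α, hli, hα, fun j hj => not_not.mp (mt hS_mem.mpr hj), fun _ h => h, rfl⟩
  obtain ⟨g, hg, i, hiS, hgi⟩ : ∃ g : ι → ℝ, ∑ j ∈ S, g j • v j = 0 ∧ ∃ i ∈ S, g i ≠ 0 := by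
    simpa [linearIndepOn_finset_iff] using hli
  obtain ⟨j₀, hj₀, hmin⟩ := (S.filter (g · ≠ 0)).exists_min_image (fun j => α j / |g j|)
    ⟨i, Finset.mem_filter.mpr ⟨hiS, hgi⟩⟩
  obtain ⟨hj₀S, hgj₀⟩ := Finset.mem_filter.mp hj₀
  set γ : ι → ℝ := fun j => if j ∈ S then g j else 0 with hγ
  set t := α j₀ / g j₀
  have hγ_sum : ∑ j, γ j • v j = 0 := by
    simpa [hγ, ite_smul, Finset.sum_ite_mem] using hg
  -- `j₀` minimises `α j / |g j|`, so subtracting `t • γ` keeps `α` nonnegative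
  have hstep : ∀ j, |t * γ j| ≤ α j := by
    intro j
    by_cases hj : j ∈ S ∧ g j ≠ 0
    · have := hmin j (Finset.mem_filter.mpr hj)
      rw [div_le_div_iff₀ (abs_pos.mpr hgj₀) (abs_pos.mpr hj.2)] at this
      have hγj : γ j = g j := if_pos hj.1
      rw [abs_mul, abs_div, abs_of_nonneg (hα j₀), hγj, div_mul_eq_mul_div,
        div_le_iff₀ (abs_pos.mpr hgj₀)]
      linarith
    · have : γ j = 0 := by by_cases hjS : j ∈ S <;> simp_all
      simpa [this] using hα j
  set α' := α - t • γ
  have hα' : 0 ≤ α' := fun j => by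
    simp only [α', Pi.sub_apply, Pi.smul_apply, smul_eq_mul, Pi.zero_apply, sub_nonneg]
    exact (le_abs_self _).trans (hstep j)
  have hα'_zero : ∀ j, α j = 0 → α' j = 0 := fun j hj => by
    have : |t * γ j| ≤ 0 := hj ▸ hstep j
    simp only [α', Pi.sub_apply, Pi.smul_apply, smul_eq_mul, hj, abs_nonpos_iff.mp this, sub_zero]
  have hα'_j₀ : α' j₀ = 0 := by
    simp only [α', Pi.sub_apply, Pi.smul_apply, smul_eq_mul, hγ, if_pos hj₀S, t]
    field_simp
    ring
  have hcard : (Finset.univ.filter (α' · ≠ 0)).card < k := by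
    refine hk ▸ (Finset.card_le_card fun j hj => ?_).trans_lt (Finset.card_erase_lt_of_mem hj₀S)
    have hj : α' j ≠ 0 := (Finset.mem_filter.mp hj).2
    exact Finset.mem_erase.mpr ⟨fun h => hj (h ▸ hα'_j₀), hS_mem.mpr (mt (hα'_zero j) hj)⟩
  obtain ⟨B, β, hB, hβ, hβB, hβα', hβsum⟩ := ih _ hcard hα' rfl
  refine ⟨B, β, hB, hβ, hβB, fun j hj => hβα' j (hα'_zero j hj), hβsum.trans ?_⟩
  simp [α', sub_smul, Finset.sum_sub_distrib, mul_smul, ← Finset.smul_sum, hγ_sum]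

end ConicCaratheodory

section Coordinates

variable {ι E : Type*} [Fintype ι] [NormedAddCommGroup E] [NormedSpace ℝ E]
  [FiniteDimensional ℝ E]

def coordsOn (v : ι → E) (B : Finset ι) : E →L[ℝ] ι → ℝ :=
  LinearMap.toContinuousLinearMap <|
    Function.ExtendByZero.linearMap ℝ ((↑) : B → ι) ∘ₗ
      (Fintype.linearCombination ℝ fun i : B => v i).leftInverse

theorem coordsOn_sum {v : ι → E} {B : Finset ι} (hB : LinearIndepOn ℝ v (B : Set ι))
    {β : ι → ℝ} (hβ : ∀ j ∉ B, β j = 0) : coordsOn v B (∑ j, β j • v j) = β := by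
  have hsum : ∑ j, β j • v j = Fintype.linearCombination ℝ (fun i : B => v i) (β ∘ (↑)) := by
    rw [Fintype.linearCombination_apply]
    simp only [Function.comp_apply]
    rw [Finset.sum_coe_sort B fun j => β j • v j]
    exact (Finset.sum_subset (Finset.subset_univ B) fun j _ hj => by simp [hβ j hj]).symm
  have hinj : LinearMap.ker (Fintype.linearCombination ℝ fun i : B => v i) = ⊥ :=
    LinearMap.ker_eq_bot.mpr hB.fintypeLinearCombination_injective
  ext j
  simp only [coordsOn, hsum, LinearMap.coe_toContinuousLinearMap', LinearMap.comp_apply,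
    LinearMap.leftInverse_apply_of_inj hinj, Function.ExtendByZero.linearMap_apply]
  by_cases hj : j ∈ B
  · exact Subtype.val_injective.extend_apply (β ∘ (↑)) (0 : ι → ℝ) ⟨j, hj⟩
  · rw [Function.extend_apply' _ _ _ fun ⟨a, ha⟩ => hj (ha ▸ a.2), hβ j hj, Pi.zero_apply]

end Coordinates

section Multipliers

variable {ι E : Type*} [Fintype ι] [NormedAddCommGroup E] [InnerProductSpace ℝ E]

def IsNormalMultiplier (v : ι → E) (c : ι → ℝ) (x w : E) (α : ι → ℝ) : Prop :=
  0 ≤ α ∧ (∀ j, ⟪v j, x⟫ < c j → α j = 0) ∧ ∑ j, α j • v j = w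

theorem eventually_forall_inner_add_smul_le {v : ι → E} {c : ι → ℝ} {x y : E}
    (hx : ∀ j, ⟪v j, x⟫ ≤ c j) (hy : ∀ j, ⟪v j, x⟫ = c j → ⟪v j, y⟫ ≤ 0) :
    ∀ᶠ δ in 𝓝[>] (0 : ℝ), ∀ j, ⟪v j, x + δ • y⟫ ≤ c j := by
  refine eventually_all.mpr fun j => ?_
  rcases (hx j).lt_or_eq with hlt | heq
  · have hcont : Continuous fun δ : ℝ => ⟪v j, x + δ • y⟫ := by fun_prop
    have := (hcont.tendsto' 0 _ (by simp)).eventually_lt_const hlt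
    exact (this.filter_mono nhdsWithin_le_nhds).mono fun _ => le_of_lt
  · filter_upwards [self_mem_nhdsWithin] with δ (hδ : 0 < δ)
    rw [inner_add_right, real_inner_smul_right, heq]
    nlinarith [hy j heq]

theorem isClosed_setOf_isNormalMultiplier (v : ι → E) (c : ι → ℝ) (L : E →L[ℝ] ι → ℝ) :
    IsClosed {p : E × E | IsNormalMultiplier v c p.1 p.2 (L p.2)} := by
  have hL : Continuous fun p : E × E => L p.2 := L.continuous.comp continuous_snd
  simp only [IsNormalMultiplier, ofPred_and, ofPred_forall]
  refine (isClosed_le continuous_const hL).inter ((isClosed_iInter fun j => ?_).inter ?_)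
  · exact isClosed_imp (isOpen_lt (by fun_prop) continuous_const)
      (isClosed_eq ((continuous_apply j).comp hL) continuous_const)
  · exact isClosed_eq (continuous_finsetSum _ fun j _ =>
      ((continuous_apply j).comp hL).smul continuous_const) continuous_snd

variable [FiniteDimensional ℝ E]

theorem IsNormalMultiplier.exists_coordsOn {v : ι → E} {c : ι → ℝ} {x w : E} {α : ι → ℝ}
    (h : IsNormalMultiplier v c x w α) : ∃ B, IsNormalMultiplier v c x w (coordsOn v B w) := by
  obtain ⟨hα, hαx, hαw⟩ := h
  obtain ⟨B, β, hB, hβ, hβB, hβα, hβw⟩ := exists_linearIndepOn_nonneg_sum_eq v hα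
  have : coordsOn v B w = β := by rw [← hαw, ← hβw, coordsOn_sum hB hβB]
  exact ⟨B, this ▸ ⟨hβ, fun j hj => hβα j (hαx j hj), hβw.trans hαw⟩⟩

def activeCone (v : ι → E) (c : ι → ℝ) (x : E) : ProperCone ℝ E where
  carrier := {w | ∃ α, IsNormalMultiplier v c x w α}
  zero_mem' := ⟨0, le_rfl, fun _ _ => rfl, by simp⟩
  add_mem' := by
    rintro _ _ ⟨α, hα, hαx, rfl⟩ ⟨β, hβ, hβx, rfl⟩
    refine ⟨α + β, add_nonneg hα hβ, fun j hj => by simp [hαx j hj, hβx j hj], ?_⟩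
    simp [add_smul, Finset.sum_add_distrib]
  smul_mem' := by
    rintro r _ ⟨α, hα, hαx, rfl⟩
    refine ⟨(r : ℝ) • α, smul_nonneg r.2 hα, fun j hj => by simp [hαx j hj], ?_⟩
    simp [Finset.smul_sum, mul_smul]
  isClosed' := by
    have : {w | ∃ α, IsNormalMultiplier v c x w α} =
        ⋃ B : Finset ι, Prod.mk x ⁻¹'
          {p : E × E | IsNormalMultiplier v c p.1 p.2 (coordsOn v B p.2)} := by
      ext w
      simp only [mem_iUnion, mem_preimage]
      exact ⟨fun ⟨_, h⟩ => h.exists_coordsOn, fun ⟨B, h⟩ => ⟨_, h⟩⟩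
    rw [this]
    exact isClosed_iUnion_of_finite fun B =>
      (isClosed_setOf_isNormalMultiplier v c _).preimage (Continuous.prodMk_right x)

theorem exists_isNormalMultiplier_of_mem_convNormal {v : ι → E} {c : ι → ℝ} {x w : E}
    (hw : w ∈ convNormal {y | ∀ j, ⟪v j, y⟫ ≤ c j} x) : ∃ α, IsNormalMultiplier v c x w α := by
  classical
  by_contra hwK
  obtain ⟨y, hyK, hwy⟩ := ProperCone.hyperplane_separation' (activeCone v c x) (x₀ := w) hwK
  have hy : ∀ j, ⟪v j, x⟫ = c j → ⟪v j, -y⟫ ≤ 0 := fun j hj => by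
    have : v j ∈ activeCone v c x :=
      ⟨Pi.single j 1, Pi.single_nonneg.mpr zero_le_one,
        fun i hi => Pi.single_eq_of_ne (by rintro rfl; exact hi.ne hj) _,
        by simp [Pi.single_apply, ite_smul]⟩
    simpa [inner_neg_right] using hyK _ this
  obtain ⟨δ, hδC, hδ : 0 < δ⟩ :=
    ((eventually_forall_inner_add_smul_le hw.1 hy).and self_mem_nhdsWithin).exists
  have := hw.2 _ hδC
  rw [add_sub_cancel_left, real_inner_smul_right, inner_neg_right] at this
  nlinarith

end Multipliers

section FirstFit

variable {X Y : Type*} [Zero Y]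

open Classical in
def pickFirst (Q : X → Y → Prop) : List (X → Y) → X → Y
  | [], _ => 0
  | f :: L, x => if Q x (f x) then f x else pickFirst Q L x

variable {Q : X → Y → Prop}

theorem pickFirst_spec {L : List (X → Y)} {x : X} (h : ∃ f ∈ L, Q x (f x)) :
    Q x (pickFirst Q L x) := by
  induction L with
  | nil => simp at h
  | cons f L ih =>
    unfold pickFirst
    split_ifs with hf
    · exact hf
    · exact ih (by simpa [hf] using h)

theorem pickFirst_eq_zero_or (L : List (X → Y)) (x : X) :
    pickFirst Q L x = 0 ∨ (Q x (pickFirst Q L x) ∧ ∃ f ∈ L, pickFirst Q L x = f x) := by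
  induction L with
  | nil => exact .inl rfl
  | cons f L ih =>
    unfold pickFirst
    split_ifs with hf
    · exact .inr ⟨hf, f, List.mem_cons_self, rfl⟩
    · exact ih.imp_right fun ⟨hQ, g, hg, hgx⟩ => ⟨hQ, g, List.mem_cons_of_mem f hg, hgx⟩

theorem measurable_pickFirst [MeasurableSpace X] [MeasurableSpace Y] {L : List (X → Y)}
    (hL : ∀ f ∈ L, Measurable f ∧ MeasurableSet {x | Q x (f x)}) :
    Measurable (pickFirst Q L) := by
  induction L with
  | nil => exact measurable_const
  | cons f L ih =>
    obtain ⟨hf, hQf⟩ := hL f List.mem_cons_self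
    exact Measurable.ite hQf hf (ih fun g hg => hL g (List.mem_cons_of_mem f hg))

end FirstFit

section NormalMultiplier

variable {ι E : Type*} [Fintype ι] [NormedAddCommGroup E] [InnerProductSpace ℝ E]
  [FiniteDimensional ℝ E]

def normalMultiplier (v : ι → E) (c : ι → ℝ) : E × E → ι → ℝ :=
  pickFirst (fun p α => IsNormalMultiplier v c p.1 p.2 α)
    ((Finset.univ : Finset (Finset ι)).toList.map fun B p => coordsOn v B p.2)

variable (v : ι → E) (c : ι → ℝ)

theorem measurable_normalMultiplier [MeasurableSpace E] [BorelSpace E] :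
    Measurable (normalMultiplier v c) := by
  refine measurable_pickFirst fun f hf => ?_
  obtain ⟨B, -, rfl⟩ := List.mem_map.mp hf
  exact ⟨((coordsOn v B).continuous.comp continuous_snd).measurable,
    (isClosed_setOf_isNormalMultiplier v c _).measurableSet⟩

theorem normalMultiplier_eq_zero_or (p : E × E) :
    normalMultiplier v c p = 0 ∨ IsNormalMultiplier v c p.1 p.2 (normalMultiplier v c p) :=
  (pickFirst_eq_zero_or _ p).imp_right And.left

theorem isNormalMultiplier_normalMultiplier {x w : E}
    (hw : w ∈ convNormal {y | ∀ j, ⟪v j, y⟫ ≤ c j} x) :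
    IsNormalMultiplier v c x w (normalMultiplier v c (x, w)) := by
  obtain ⟨α, hα⟩ := exists_isNormalMultiplier_of_mem_convNormal hw
  obtain ⟨B, hB⟩ := hα.exists_coordsOn
  exact pickFirst_spec ⟨_, List.mem_map.mpr ⟨B, Finset.mem_toList.mpr (Finset.mem_univ B), rfl⟩, hB⟩

theorem exists_norm_normalMultiplier_le :
    ∃ K, ∀ p : E × E, ‖normalMultiplier v c p‖ ≤ K * ‖p.2‖ := by
  refine ⟨∑ B : Finset ι, ‖coordsOn v B‖, fun p => ?_⟩
  rcases pickFirst_eq_zero_or (Q := fun p α => IsNormalMultiplier v c p.1 p.2 α) _ p with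
    h | ⟨-, f, hf, hfp⟩
  · rw [normalMultiplier, h, norm_zero]; positivity
  · obtain ⟨B, -, rfl⟩ := List.mem_map.mp hf
    rw [normalMultiplier, hfp]
    calc ‖coordsOn v B p.2‖ ≤ ‖coordsOn v B‖ * ‖p.2‖ := (coordsOn v B).le_opNorm p.2
      _ ≤ _ := by gcongr; exact Finset.single_le_sum (fun B _ => norm_nonneg _) (Finset.mem_univ B)

end NormalMultiplier

section Feasible

variable {n d : ℕ} {T : ℝ} {x0 : Euc n} {C : Set (Euc n)} {U : Set (Euc d)}
  {g : WithLp 2 (Euc n × Euc d) → Euc n} {x x' : ℝ → Euc n} {u : ℝ → Euc d}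

theorem FeasibleP.continuousOn (hT : 0 ≤ T) (h : FeasibleP T x0 C U g x x' u) :
    ContinuousOn x (Icc 0 T) := by
  have hprim := intervalIntegral.continuousOn_primitive_interval
    (f := x') (a := 0) (b := T) (by rw [uIcc_of_le hT]; exact h.2.2.1)
  rw [uIcc_of_le hT] at hprim
  exact (continuousOn_const.add hprim).congr h.2.1

theorem FeasibleP.exists_measurable_memLp_normal (hT : 0 ≤ T) (h : FeasibleP T x0 C U g x x' u)
    (hg : Continuous g) {β : ℝ} (hβ0 : 0 ≤ β)
    (hβ : ∀ y : Euc n, ∀ v ∈ U, ‖g (pmk y v)‖ ≤ β * (1 + ‖y‖)) :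
    ∃ w : ℝ → Euc n, Measurable w ∧ MemLp w 2 (volume.restrict (Icc 0 T)) ∧
      ∀ᵐ t, t ∈ Icc 0 T → w t ∈ convNormal C (x t) ∧ -x' t = w t + g (pmk (x t) (u t)) := by
  have hx := h.continuousOn hT
  obtain ⟨-, -, hx'int, hx'sq, hu, hU, hincl⟩ := h
  obtain ⟨M, hM⟩ := isCompact_Icc.exists_bound_of_continuousOn hx
  have hpmk : Continuous fun q : Euc n × Euc d => pmk q.1 q.2 := WithLp.prod_continuous_toLp 2 _ _
  have hgxu : AEStronglyMeasurable (fun t => g (pmk (x t) (u t))) (volume.restrict (Icc 0 T)) :=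
    (hg.comp hpmk).comp_aestronglyMeasurable
      ((hx.aestronglyMeasurable measurableSet_Icc).prodMk hu)
  have hgxu_bound : ∀ᵐ t ∂volume.restrict (Icc 0 T), ‖g (pmk (x t) (u t))‖ ≤ β * (1 + M) := by
    filter_upwards [(ae_restrict_iff' measurableSet_Icc).mpr hU, ae_restrict_mem measurableSet_Icc]
      with t hUt ht
    exact (hβ _ _ hUt).trans (by gcongr; exact hM t ht)
  have hF : MemLp (fun t => -x' t - g (pmk (x t) (u t))) 2 (volume.restrict (Icc 0 T)) :=
    ((memLp_two_iff_integrable_sq_norm hx'int.aestronglyMeasurable).mpr hx'sq).neg.sub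
      (MemLp.of_bound hgxu _ hgxu_bound)
  refine ⟨hF.1.mk _, hF.1.stronglyMeasurable_mk.measurable, hF.ae_eq hF.1.ae_eq_mk, ?_⟩
  filter_upwards [hincl, (ae_restrict_iff' measurableSet_Icc).mp hF.1.ae_eq_mk] with t hNt hwt ht
  obtain ⟨v, hv, hv_eq⟩ := hNt ht
  rw [← hwt ht, hv_eq, add_sub_cancel_right]
  exact ⟨hv, rfl⟩

end Feasible

theorem statement15_general (n d s : ℕ) (T : ℝ) (hT : 0 < T)
    (xs : Fin s → Euc n) (c : Fin s → ℝ)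
    (C : Set (Euc n)) (hC : C = {x | ∀ j, ⟪xs j, x⟫ ≤ c j})
    (x0 : Euc n)
    (Uset : Set (Euc d))
    (g : WithLp 2 (Euc n × Euc d) → Euc n)
    (hgLip : ∀ B : Set (WithLp 2 (Euc n × Euc d)), Bornology.IsBounded B →
      ∃ K : NNReal, LipschitzOnWith K g B)
    (hgrow : ∃ β > (0:ℝ), ∀ (x : Euc n), ∀ u ∈ Uset, ‖g (pmk x u)‖ ≤ β * (1 + ‖x‖))
    (xb xb' : ℝ → Euc n) (ub : ℝ → Euc d)
    (hfeas : FeasibleP T x0 C Uset g xb xb' ub) :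
    ∃ η : Fin s → ℝ → ℝ,
      (∀ j, Measurable (η j)) ∧
      (∀ j, ∀ t ∈ Set.Icc 0 T, 0 ≤ η j t) ∧
      (∀ j, IntegrableOn (fun t => (η j t) ^ 2) (Set.Icc 0 T)) ∧
      (∀ j, ∀ t ∈ Set.Icc 0 T, ⟪xs j, xb t⟫ < c j → η j t = 0) ∧
      (∀ᵐ t ∂(volume : Measure ℝ), t ∈ Set.Icc 0 T →
        -xb' t = ∑ j, η j t • xs j + g (pmk (xb t) (ub t))) := by
  obtain ⟨β, hβ0, hβ⟩ := hgrow
  have hg : Continuous g := LocallyLipschitz.continuous fun z =>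
    let ⟨K, hK⟩ := hgLip _ (Metric.isBounded_closedBall (x := z) (r := 1))
    ⟨K, _, Metric.closedBall_mem_nhds z one_pos, hK⟩
  obtain ⟨w, hw, hw2, hwN⟩ := hfeas.exists_measurable_memLp_normal hT.le hg hβ0.le hβ
  let xe := IccExtend hT.le ((Icc 0 T).domRestrict xb)
  have hxe : Continuous xe := (hfeas.continuousOn hT.le).domRestrict.Icc_extend'
  let α t := normalMultiplier xs c (xe t, w t)
  have hα_eq : ∀ t ∈ Icc 0 T, α t = normalMultiplier xs c (xb t, w t) := fun t ht => by
    simp only [α, xe, IccExtend_of_mem _ _ ht, domRestrict_apply]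
  have hα : ∀ t ∈ Icc 0 T, α t = 0 ∨ IsNormalMultiplier xs c (xb t) (w t) (α t) := fun t ht =>
    hα_eq t ht ▸ normalMultiplier_eq_zero_or xs c _
  have hα_meas : Measurable α := (measurable_normalMultiplier xs c).comp (hxe.measurable.prodMk hw)
  obtain ⟨K, hK⟩ := exists_norm_normalMultiplier_le xs c
  refine ⟨fun j t => α t j, fun j => hα_meas.eval, ?_, fun j => ?_, ?_, ?_⟩
  · intro j t ht
    rcases hα t ht with h | h
    exacts [(congrFun h j).symm.le, h.1 j]
  · exact (hw2.of_le_mul hα_meas.eval.aestronglyMeasurable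
      (ae_of_all _ fun t => (norm_le_pi_norm (α t) j).trans (hK _))).integrable_sq
  · intro j t ht hlt
    rcases hα t ht with h | h
    exacts [congrFun h j, h.2.1 j hlt]
  · filter_upwards [hwN] with t ht ht'
    obtain ⟨hN, heq⟩ := ht ht'
    rw [hC] at hN
    rw [heq, hα_eq t ht', (isNormalMultiplier_normalMultiplier xs c hN).2.2]

/-- measurable multiplier representation of the velocity of a feasible
sweeping trajectory under PLICQ. -/
theorem statement15 (n d s : ℕ) (T : ℝ) (hT : 0 < T)
    (xs : Fin s → Euc n) (c : Fin s → ℝ)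
    (C : Set (Euc n)) (hC : C = {x | ∀ j, ⟪xs j, x⟫ ≤ c j})
    (x0 : Euc n) (hx0 : x0 ∈ C)
    (φ : Euc n → ℝ) (hφ : LocallyLipschitz φ)
    (Uset : Set (Euc d)) (hUc : IsCompact Uset) (hUne : Uset.Nonempty)
    (g : WithLp 2 (Euc n × Euc d) → Euc n)
    (hgLip : ∀ B : Set (WithLp 2 (Euc n × Euc d)), Bornology.IsBounded B →
      ∃ K : NNReal, LipschitzOnWith K g B)
    (hgrow : ∃ β > (0:ℝ), ∀ (x : Euc n), ∀ u ∈ Uset, ‖g (pmk x u)‖ ≤ β * (1 + ‖x‖))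
    (xb xb' : ℝ → Euc n) (ub : ℝ → Euc d)
    (hfeas : FeasibleP T x0 C Uset g xb xb' ub)
    (hPLICQ : ∀ t ∈ Set.Icc 0 T, PLICQ xs c (xb t)) :
    ∃ η : Fin s → ℝ → ℝ,
      (∀ j, Measurable (η j)) ∧
      (∀ j, ∀ t ∈ Set.Icc 0 T, 0 ≤ η j t) ∧
      (∀ j, IntegrableOn (fun t => (η j t) ^ 2) (Set.Icc 0 T)) ∧
      (∀ j, ∀ t ∈ Set.Icc 0 T, ⟪xs j, xb t⟫ < c j → η j t = 0) ∧
      (∀ᵐ t ∂(volume : Measure ℝ), t ∈ Set.Icc 0 T →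
        -xb' t = ∑ j, η j t • xs j + g (pmk (xb t) (ub t))) :=
  statement15_general n d s T hT xs c C hC x0 Uset g hgLip hgrow xb xb' ub hfeas
end
end
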